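/- arXiv:1510.04176 — 6 statements merged into one kernel-verified Lean document; each statement's English description precedes it below -/
import Mathlib

section
/- The n-fold iterated multiplicative integral of a positive continuous function f starting at a equals exp of the n-fold iterated Riemann integral of ln ∘ f: (ₐI*ⁿ f)(x) = exp((ₐIⁿ (ln∘f))(x)), where (ₐIⁿ g)(x) = (1/(n−1)!) ∫ₐˣ (x−t)^{n−1} g(t) dt. -/
/-!
Since `log ∘ exp = id`, taking logarithms turns the iterated multiplicative integral of `f` into
the ordinary iterated integral of `log ∘ f`, which Cauchy's formula for repeated integration
evaluates. For the latter, `G_m[g](y) = ∫ s in a..y, (y - s) ^ m * g s` satisfies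
`G_{m+1}[g](y) = y * G_m[g](y) - G_m[s * g](y)`, so induction on `m`, simultaneously for all `g`,
gives `G_{m+1}[g]' = (m + 1) * G_m[g]`.
-/

open Real intervalIntegral

/-- The `n`-fold iterated multiplicative integral starting at `a`. -/
noncomputable def multIntIter (a : ℝ) : ℕ → (ℝ → ℝ) → ℝ → ℝ
  | 0, f, x => f x
  | n + 1, f, x => Real.exp (∫ t in a..x, Real.log (multIntIter a n f t))

open Set

/-- The paper's `ₐIⁿ`. -/
noncomputable def iteratedIntegral (a : ℝ) : ℕ → (ℝ → ℝ) → ℝ → ℝ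
  | 0, g => g
  | n + 1, g => fun x => ∫ t in a..x, iteratedIntegral a n g t

theorem multIntIter_succ_eq_exp_iteratedIntegral (a : ℝ) (f : ℝ → ℝ) (n : ℕ) (x : ℝ) :
    multIntIter a (n + 1) f x = exp (iteratedIntegral a (n + 1) (fun t => log (f t)) x) := by
  induction n generalizing x with
  | zero => rfl
  | succ n ih =>
    rw [multIntIter.eq_2]
    simp only [ih, log_exp]
    rfl

theorem iteratedIntegral_congr {a b x : ℝ} {g g' : ℝ → ℝ} (h : EqOn g g' (Icc a b))
    (hx : x ∈ Icc a b) (n : ℕ) : iteratedIntegral a n g x = iteratedIntegral a n g' x := by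
  induction n generalizing x with
  | zero => exact h hx
  | succ n ih =>
    exact integral_congr fun t ht =>
      ih (uIcc_subset_Icc (left_mem_Icc.2 (hx.1.trans hx.2)) hx ht)

theorem ContinuousOn.exists_continuous_eqOn_Icc {α β : Type*} [LinearOrder α]
    [TopologicalSpace α] [OrderTopology α] [TopologicalSpace β] {a b : α} {f : α → β}
    (hab : a ≤ b) (hf : ContinuousOn f (Icc a b)) :
    ∃ g : α → β, Continuous g ∧ EqOn g f (Icc a b) :=
  ⟨IccExtend hab ((Icc a b).domRestrict f), hf.domRestrict.Icc_extend',
    fun _ hx => IccExtend_of_mem hab _ hx⟩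

section CauchyFormula

variable {a : ℝ} {g : ℝ → ℝ}

theorem integral_sub_pow_succ_mul (hg : Continuous g) (m : ℕ) (y : ℝ) :
    ∫ s in a..y, (y - s) ^ (m + 1) * g s =
      y * (∫ s in a..y, (y - s) ^ m * g s) - ∫ s in a..y, (y - s) ^ m * (s * g s) := by
  rw [← integral_const_mul, ← integral_sub (Continuous.intervalIntegrable (by fun_prop) _ _)
    (Continuous.intervalIntegrable (by fun_prop) _ _)]
  congr 1 with s
  ring

theorem hasDerivAt_integral_sub_pow_succ_mul (hg : Continuous g) (m : ℕ) (y : ℝ) :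
    HasDerivAt (fun y => ∫ s in a..y, (y - s) ^ (m + 1) * g s)
      ((m + 1) * ∫ s in a..y, (y - s) ^ m * g s) y := by
  have hsg : Continuous fun s => s * g s := continuous_id.mul hg
  induction m generalizing g with
  | zero =>
    simp_rw [integral_sub_pow_succ_mul hg 0, pow_zero, one_mul]
    refine (((hasDerivAt_id' y).mul (hg.integral_hasStrictDerivAt a y).hasDerivAt).sub
      (hsg.integral_hasStrictDerivAt a y).hasDerivAt).congr_deriv ?_
    simp
  | succ m ih =>
    simp_rw [integral_sub_pow_succ_mul hg (m + 1)]
    refine (((hasDerivAt_id' y).mul (ih hg hsg)).sub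
      (ih hsg (continuous_id.mul hsg))).congr_deriv ?_
    rw [integral_sub_pow_succ_mul hg m]
    push_cast
    ring

theorem integral_integral_sub_pow_mul (hg : Continuous g) (m : ℕ) (x : ℝ) :
    ∫ t in a..x, ∫ s in a..t, (t - s) ^ m * g s =
      (∫ s in a..x, (x - s) ^ (m + 1) * g s) / (m + 1) := by
  have hFTC := integral_eq_sub_of_hasDerivAt
    (fun t _ => hasDerivAt_integral_sub_pow_succ_mul (a := a) hg m t)
    (Continuous.intervalIntegrable (by fun_prop) a x)
  rw [integral_const_mul, integral_same, sub_zero] at hFTC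
  rw [← hFTC]
  field_simp

theorem iteratedIntegral_succ_eq (hg : Continuous g) (m : ℕ) (x : ℝ) :
    iteratedIntegral a (m + 1) g x = (∫ t in a..x, (x - t) ^ m * g t) / m.factorial := by
  induction m generalizing x with
  | zero => simp [iteratedIntegral]
  | succ m ih =>
    simp only [iteratedIntegral] at ih ⊢
    simp_rw [ih, integral_div, integral_integral_sub_pow_mul hg, Nat.factorial_succ]
    push_cast
    field_simp

end CauchyFormula

theorem iterated_mult_integral_eq_general
    (f : ℝ → ℝ) (a b x : ℝ) (n : ℕ) (hn : 1 ≤ n)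
    (hx : x ∈ Set.Icc a b)
    (hcont : ContinuousOn f (Set.Icc a b))
    (hpos : ∀ t ∈ Set.Icc a b, 0 < f t) :
    multIntIter a n f x =
      Real.exp ((1 / (Nat.factorial (n - 1) : ℝ)) *
        ∫ t in a..x, (x - t) ^ (n - 1) * Real.log (f t)) := by
  obtain ⟨m, rfl⟩ := Nat.exists_eq_add_of_le' hn
  have hab : a ≤ b := hx.1.trans hx.2
  obtain ⟨g, hg, hgf⟩ :=
    (hcont.log fun t ht => (hpos t ht).ne').exists_continuous_eqOn_Icc hab
  have hgf_uIcc : EqOn (fun t => (x - t) ^ m * g t) (fun t => (x - t) ^ m * log (f t))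
      (uIcc a x) := fun t ht => by
    simp only [hgf (uIcc_subset_Icc (left_mem_Icc.2 hab) hx ht)]
  rw [multIntIter_succ_eq_exp_iteratedIntegral, Nat.add_sub_cancel,
    ← iteratedIntegral_congr hgf hx, iteratedIntegral_succ_eq hg, integral_congr hgf_uIcc,
    one_div_mul_eq_div]

theorem iterated_mult_integral_eq
    (f : ℝ → ℝ) (a b x : ℝ) (n : ℕ) (hn : 1 ≤ n)
    (hab : a < b) (hx : x ∈ Set.Icc a b)
    (hcont : ContinuousOn f (Set.Icc a b))
    (hpos : ∀ t ∈ Set.Icc a b, 0 < f t) :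
    multIntIter a n f x =
      Real.exp ((1 / (Nat.factorial (n - 1) : ℝ)) *
        ∫ t in a..x, (x - t) ^ (n - 1) * Real.log (f t)) :=
  iterated_mult_integral_eq_general f a b x n hn hx hcont hpos
end

section
/- For a positive continuous function f on [a, b] and 0 < α ≤ 1, applying the multiplicative conformable derivative to the multiplicative conformable integral recovers f: (*T_α^a *I_α^a f)(t) = f(t) for t ∈ (a, b). -/
/-!
The weight `(x - a) ^ (α - 1)` is integrable near `a` because `α - 1 > -1`, and `log ∘ f` is
continuous, so by the fundamental theorem of calculus the logarithm of `*I_α^a f` has derivative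
`(t - a) ^ (α - 1) * log (f t)` at every interior point. The factor `(t - a) ^ (1 - α)` of the
conformable derivative cancels the weight, leaving `exp (log (f t)) = f t`.
-/

open Real intervalIntegral

theorem intervalIntegrable_sub_rpow_mul {g : ℝ → ℝ} {a t r : ℝ} (hr : -1 < r)
    (hg : ContinuousOn g (Set.uIcc a t)) :
    IntervalIntegrable (fun x => (x - a) ^ r * g x) MeasureTheory.volume a t := by
  have hweight : IntervalIntegrable (fun x => (x - a) ^ r) MeasureTheory.volume a t := by
    simpa using (intervalIntegrable_rpow' (a := 0) (b := t - a) hr).comp_sub_right a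
  exact hweight.mul_continuousOn hg

theorem hasDerivAt_integral_sub_rpow_mul {g : ℝ → ℝ} {a b t r : ℝ} (hr : -1 < r)
    (hg : ContinuousOn g (Set.Icc a b)) (ht : t ∈ Set.Ioo a b) :
    HasDerivAt (fun y => ∫ x in a..y, (x - a) ^ r * g x) ((t - a) ^ r * g t) t := by
  have hcont : ContinuousOn (fun x => (x - a) ^ r * g x) (Set.Ioo a b) := by
    refine ContinuousOn.mul ?_ (hg.mono Set.Ioo_subset_Icc_self)
    exact (continuousOn_id.sub continuousOn_const).rpow_const fun x hx =>
      Or.inl (sub_pos.2 hx.1).ne'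
  have hsub : Set.uIcc a t ⊆ Set.Icc a b := by
    rw [Set.uIcc_of_le ht.1.le]
    exact Set.Icc_subset_Icc_right ht.2.le
  exact integral_hasDerivAt_right (intervalIntegrable_sub_rpow_mul hr (hg.mono hsub))
    (hcont.stronglyMeasurableAtFilter isOpen_Ioo t ht)
    (hcont.continuousAt (isOpen_Ioo.mem_nhds ht))

theorem mult_conformable_deriv_of_integral_general
    (f : ℝ → ℝ) (a b t α : ℝ)
    (hα : 0 < α) (ht : t ∈ Set.Ioo a b)
    (hcont : ContinuousOn f (Set.Icc a b))
    (hpos : ∀ y ∈ Set.Icc a b, 0 < f y) :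
    Real.exp ((t - a) ^ (1 - α) *
        deriv (fun y =>
          Real.log (Real.exp (∫ x in a..y, (x - a) ^ (α - 1) * Real.log (f x)))) t) =
      f t := by
  have hlog : ContinuousOn (fun x => log (f x)) (Set.Icc a b) :=
    hcont.log fun y hy => (hpos y hy).ne'
  have hderiv := hasDerivAt_integral_sub_rpow_mul (by linarith : -1 < α - 1) hlog ht
  have hcancel : (t - a) ^ (1 - α) * (t - a) ^ (α - 1) = 1 := by
    rw [← rpow_add (sub_pos.2 ht.1)]
    simp
  simp only [log_exp]
  rw [hderiv.deriv, ← mul_assoc, hcancel, one_mul,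
    exp_log (hpos t (Set.Ioo_subset_Icc_self ht))]

theorem mult_conformable_deriv_of_integral
    (f : ℝ → ℝ) (a b t α : ℝ)
    (hα : 0 < α) (hα1 : α ≤ 1) (ht : t ∈ Set.Ioo a b)
    (hcont : ContinuousOn f (Set.Icc a b))
    (hpos : ∀ y ∈ Set.Icc a b, 0 < f y) :
    Real.exp ((t - a) ^ (1 - α) *
        deriv (fun y =>
          Real.log (Real.exp (∫ x in a..y, (x - a) ^ (α - 1) * Real.log (f x)))) t) =
      f t :=
  mult_conformable_deriv_of_integral_general f a b t α hα ht hcont hpos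
end

section
/- For a positive differentiable function f on [a, b] and 0 < α ≤ 1, applying the multiplicative conformable integral to the multiplicative conformable derivative gives (*I_α^a *T_α^a f)(t) = f(t)/f(a). -/
/-! On `(a, t)` the conformable weights cancel, `(x - a) ^ (α - 1) * (x - a) ^ (1 - α) = 1`, so the
exponent is `∫ f' / f = log (f t) - log (f a)` by the fundamental theorem of calculus. -/

open Real intervalIntegral

section

open Set MeasureTheory

theorem ContDiffOn.intervalIntegrable_deriv {f : ℝ → ℝ} {a b : ℝ} (hab : a ≤ b)
    (hf : ContDiffOn ℝ 1 f (Icc a b)) : IntervalIntegrable (deriv f) volume a b := by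
  rcases hab.eq_or_lt with rfl | hab
  · exact IntervalIntegrable.refl
  rw [intervalIntegrable_iff_integrableOn_Ioo_of_le hab.le]
  have hcont := hf.continuousOn_derivWithin (uniqueDiffOn_Icc hab) le_rfl
  refine (hcont.integrableOn_Icc.mono_set Ioo_subset_Icc_self).congr_fun (fun x hx => ?_)
    measurableSet_Ioo
  exact derivWithin_of_mem_nhds (Icc_mem_nhds hx.1 hx.2)

theorem integral_deriv_div_self_eq_log_sub_log {f : ℝ → ℝ} {a b : ℝ} (hab : a ≤ b)
    (hf : ContDiffOn ℝ 1 f (Icc a b)) (hf0 : ∀ x ∈ Icc a b, f x ≠ 0) :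
    ∫ x in a..b, deriv f x / f x = log (f b) - log (f a) := by
  have hint : IntervalIntegrable (fun x => deriv f x / f x) volume a b := by
    have hinv : ContinuousOn (fun x => (f x)⁻¹) (uIcc a b) := by
      rw [uIcc_of_le hab]
      exact hf.continuousOn.inv₀ hf0
    simpa only [div_eq_mul_inv] using (hf.intervalIntegrable_deriv hab).mul_continuousOn hinv
  refine integral_eq_sub_of_hasDerivAt_of_le hab (hf.continuousOn.log hf0) (fun x hx => ?_) hint
  have hdiff : DifferentiableAt ℝ f x :=
    (hf.differentiableOn one_ne_zero).differentiableAt (Icc_mem_nhds hx.1 hx.2)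
  exact hdiff.hasDerivAt.log (hf0 x (Ioo_subset_Icc_self hx))

end

theorem mult_conformable_integral_of_deriv_general
    (f : ℝ → ℝ) (a b t α : ℝ)
    (ht : t ∈ Set.Icc a b)
    (hf : ContDiffOn ℝ 1 f (Set.Icc a b))
    (hpos : ∀ y ∈ Set.Icc a b, 0 < f y) :
    Real.exp (∫ x in a..t, (x - a) ^ (α - 1) *
        Real.log (Real.exp ((x - a) ^ (1 - α) * deriv f x / f x))) =
      f t / f a := by
  obtain ⟨hat, htb⟩ := ht
  have hpos_t : ∀ x ∈ Set.Icc a t, 0 < f x := fun x hx => hpos x ⟨hx.1, hx.2.trans htb⟩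
  have hweight : Set.EqOn (fun x => (x - a) ^ (α - 1) *
      Real.log (Real.exp ((x - a) ^ (1 - α) * deriv f x / f x)))
      (fun x => deriv f x / f x) (Set.Ioo a t) := fun x hx => by
    dsimp only
    rw [log_exp, mul_div_assoc, ← mul_assoc, ← rpow_add (sub_pos.2 hx.1)]
    norm_num
  rw [integral_congr_Ioo_of_le hat hweight,
    integral_deriv_div_self_eq_log_sub_log hat (hf.mono (Set.Icc_subset_Icc_right htb))
      (fun x hx => (hpos_t x hx).ne'),
    exp_sub, exp_log (hpos_t t ⟨hat, le_rfl⟩), exp_log (hpos_t a ⟨le_rfl, hat⟩)]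

theorem mult_conformable_integral_of_deriv
    (f : ℝ → ℝ) (a b t α : ℝ)
    (hα : 0 < α) (hα1 : α ≤ 1) (hab : a < b) (ht : t ∈ Set.Icc a b)
    (hf : ContDiffOn ℝ 1 f (Set.Icc a b))
    (hpos : ∀ y ∈ Set.Icc a b, 0 < f y) :
    Real.exp (∫ x in a..t, (x - a) ^ (α - 1) *
        Real.log (Real.exp ((x - a) ^ (1 - α) * deriv f x / f x))) =
      f t / f a :=
  mult_conformable_integral_of_deriv_general f a b t α ht hf hpos
end

section
/- For a positive differentiable function f on [a, b] and 0 < α ≤ 1, the right multiplicative conformable integral of the right multiplicative conformable derivative gives (ᵇ_α I* ᵇ_α T* f)(t) = f(t)/f(b). -/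
open Real intervalIntegral

/-! The conformable weight `(b - x) ^ (α - 1)` of the integral cancels the weight
`(b - x) ^ (1 - α)` of the derivative, so the exponent of the integral is
`-∫ₜᵇ f' / f = log f t - log f b`, by the fundamental theorem of calculus for `log ∘ f`. -/

theorem rpow_sub_one_mul_log_exp_neg_rpow_one_sub_mul {s : ℝ} (hs : 0 < s) (α c : ℝ) :
    s ^ (α - 1) * Real.log (Real.exp (-s ^ (1 - α) * c)) = -c := by
  have hcancel : s ^ (α - 1) * s ^ (1 - α) = 1 := by
    rw [← Real.rpow_add hs]; norm_num
  rw [Real.log_exp]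
  linear_combination (-c) * hcancel

theorem integral_deriv_div_eq_log_sub_log {f : ℝ → ℝ} {a b : ℝ} (hab : a ≤ b)
    (hf : ContDiffOn ℝ 1 f (Set.Icc a b)) (hpos : ∀ y ∈ Set.Icc a b, 0 < f y) :
    ∫ x in a..b, deriv f x / f x = Real.log (f b) - Real.log (f a) := by
  have hlog : ContDiffOn ℝ 1 (fun x => Real.log (f x)) (Set.Icc a b) :=
    hf.log fun y hy => (hpos y hy).ne'
  rw [← integral_deriv_of_contDiffOn_Icc hlog hab]
  refine integral_congr_Ioo_of_le hab fun x hx => ?_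
  have hdiff : DifferentiableAt ℝ f x :=
    (hf.differentiableOn one_ne_zero x (Set.Ioo_subset_Icc_self hx)).differentiableAt
      (Icc_mem_nhds hx.1 hx.2)
  exact (deriv.log hdiff (hpos x (Set.Ioo_subset_Icc_self hx)).ne').symm

theorem right_mult_conformable_integral_of_deriv_general
    (f : ℝ → ℝ) (a b t α : ℝ)
    (ht : t ∈ Set.Icc a b)
    (hf : ContDiffOn ℝ 1 f (Set.Icc a b))
    (hpos : ∀ y ∈ Set.Icc a b, 0 < f y) :
    Real.exp (∫ x in t..b, (b - x) ^ (α - 1) *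
        Real.log (Real.exp (-(b - x) ^ (1 - α) * deriv f x / f x))) =
      f t / f b := by
  have hsub : Set.Icc t b ⊆ Set.Icc a b := Set.Icc_subset_Icc ht.1 le_rfl
  have hintegrand : ∫ x in t..b, (b - x) ^ (α - 1) *
      Real.log (Real.exp (-(b - x) ^ (1 - α) * deriv f x / f x)) =
      ∫ x in t..b, -(deriv f x / f x) :=
    integral_congr_Ioo_of_le ht.2 fun x hx => by
      simpa only [mul_div_assoc] using
        rpow_sub_one_mul_log_exp_neg_rpow_one_sub_mul (sub_pos.mpr hx.2) α (deriv f x / f x)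
  rw [hintegrand, integral_neg,
    integral_deriv_div_eq_log_sub_log ht.2 (hf.mono hsub) fun y hy => hpos y (hsub hy),
    neg_sub, Real.exp_sub, Real.exp_log (hpos t ht),
    Real.exp_log (hpos b ⟨ht.1.trans ht.2, le_rfl⟩)]

theorem right_mult_conformable_integral_of_deriv
    (f : ℝ → ℝ) (a b t α : ℝ)
    (hα : 0 < α) (hα1 : α ≤ 1) (hab : a < b) (ht : t ∈ Set.Icc a b)
    (hf : ContDiffOn ℝ 1 f (Set.Icc a b))
    (hpos : ∀ y ∈ Set.Icc a b, 0 < f y) :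
    Real.exp (∫ x in t..b, (b - x) ^ (α - 1) *
        Real.log (Real.exp (-(b - x) ^ (1 - α) * deriv f x / f x))) =
      f t / f b :=
  right_mult_conformable_integral_of_deriv_general f a b t α ht hf hpos
end

section
/- For α ∈ (n, n+1], β = α − n, and a positive (n+1)-times continuously differentiable function f with g = ln∘f, the higher-order multiplicative conformable integral applied to the higher-order multiplicative conformable derivative satisfies (*I_α^a *T_α^a f)(t) = f(t) / ∏_{k=0}^{n} exp(g^{(k)}(a)(t−a)^k / k!). -/
open Real intervalIntegral Finset
open scoped Nat

/-!
On `(a, t]` the weight `(x - a) ^ (β - 1)` of the integral cancels the conformable factor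
`(x - a) ^ (1 - β)` of the derivative, so the exponent is the integral form of the Taylor remainder
of `g = log ∘ f` at `a`. Exponentiating Taylor's formula turns the Taylor polynomial of `g` into the
product in the denominator and `exp (g t)` into `f t`.
-/

theorem taylor_integral_remainder_of_contDiff {F : Type*} [NormedAddCommGroup F]
    [NormedSpace ℝ F] [CompleteSpace F] {f : ℝ → F} {x₀ x : ℝ} {n : ℕ}
    (hf : ContDiff ℝ (n + 1) f) :
    f x - ∑ k ∈ range (n + 1), ((k ! : ℝ)⁻¹ * (x - x₀) ^ k) • iteratedDeriv k f x₀ =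
      ∫ t in x₀..x, ((x - t) ^ n / n !) • iteratedDeriv (n + 1) f t := by
  rcases eq_or_ne x₀ x with rfl | hne
  · simp [sum_range_succ']
  have hs : UniqueDiffOn ℝ (Set.uIcc x₀ x) := uniqueDiffOn_uIcc hne
  have hderiv {k : ℕ} (hk : k ≤ n + 1) {y : ℝ} (hy : y ∈ Set.uIcc x₀ x) :
      iteratedDerivWithin k f (Set.uIcc x₀ x) y = iteratedDeriv k f y :=
    iteratedDerivWithin_eq_iteratedDeriv hs (hf.contDiffAt.of_le (by exact_mod_cast hk)) hy
  have h := taylor_integral_remainder (f := f) (x₀ := x₀) (x := x) (n := n)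
    (by exact_mod_cast hf.contDiffOn)
  rw [taylor_within_apply] at h
  convert h using 1
  · congr 1
    refine sum_congr rfl fun k hk => ?_
    rw [hderiv (by grind) Set.left_mem_uIcc]
  · refine intervalIntegral.integral_congr fun t ht => ?_
    rw [hderiv le_rfl ht]

theorem rpow_sub_one_mul_log_exp_rpow_one_sub_mul {y : ℝ} (hy : 0 < y) (β c : ℝ) :
    y ^ (β - 1) * log (exp (y ^ (1 - β) * c)) = c := by
  rw [log_exp, ← mul_assoc, ← rpow_add hy, show β - 1 + (1 - β) = 0 by ring, rpow_zero, one_mul]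

theorem integral_mul_rpow_mul_log_exp_rpow_mul {a t : ℝ} (hat : a ≤ t) (β : ℝ) (w h : ℝ → ℝ) :
    ∫ x in a..t, w x * ((x - a) ^ (β - 1) * log (exp ((x - a) ^ (1 - β) * h x))) =
      ∫ x in a..t, w x * h x := by
  refine integral_congr_ae (Filter.Eventually.of_forall fun x hx => ?_)
  rw [Set.uIoc_of_le hat] at hx
  rw [rpow_sub_one_mul_log_exp_rpow_one_sub_mul (sub_pos.2 hx.1)]

theorem exp_taylor_integral_remainder_log {f : ℝ → ℝ} {n : ℕ} (hfpos : ∀ y, 0 < f y)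
    (hf : ContDiff ℝ (n + 1) f) (a t : ℝ) :
    exp ((1 / (n ! : ℝ)) *
        ∫ x in a..t, (t - x) ^ n * iteratedDeriv (n + 1) (fun y => log (f y)) x) =
      f t / ∏ k ∈ range (n + 1),
        exp (iteratedDeriv k (fun y => log (f y)) a * (t - a) ^ k / (k ! : ℝ)) := by
  have hlog : ContDiff ℝ (n + 1) (fun y => log (f y)) := hf.log fun y => (hfpos y).ne'
  have htaylor := taylor_integral_remainder_of_contDiff (x₀ := a) (x := t) hlog
  simp only [smul_eq_mul] at htaylor
  rw [← integral_const_mul, ← exp_sum, ← exp_log (hfpos t), ← exp_sub]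
  congr 1
  convert htaylor.symm using 1
  · exact intervalIntegral.integral_congr fun x _ => by ring
  · congr 1
    exact sum_congr rfl fun k _ => by ring

theorem higher_mult_conformable_integral_of_deriv_general
    (f : ℝ → ℝ) (a b t β : ℝ) (n : ℕ)
    (ht : t ∈ Set.Icc a b)
    (hfpos : ∀ y, 0 < f y) (hf : ContDiff ℝ (n + 1) f)
    (g : ℝ → ℝ) (hg : g = fun y => Real.log (f y)) :
    Real.exp ((1 / (Nat.factorial n : ℝ)) *
        ∫ x in a..t, (t - x) ^ n *
          ((x - a) ^ (β - 1) *
            Real.log (Real.exp ((x - a) ^ (1 - β) * iteratedDeriv (n + 1) g x)))) =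
      f t / ∏ k ∈ Finset.range (n + 1),
        Real.exp (iteratedDeriv k g a * (t - a) ^ k / (Nat.factorial k : ℝ)) := by
  subst hg
  rw [integral_mul_rpow_mul_log_exp_rpow_mul ht.1]
  exact exp_taylor_integral_remainder_log hfpos hf a t

theorem higher_mult_conformable_integral_of_deriv
    (f : ℝ → ℝ) (a b t α β : ℝ) (n : ℕ)
    (hα : (n : ℝ) < α) (hα1 : α ≤ (n : ℝ) + 1) (hβ : β = α - n)
    (hab : a < b) (ht : t ∈ Set.Icc a b)
    (hfpos : ∀ y, 0 < f y) (hf : ContDiff ℝ (n + 1) f)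
    (g : ℝ → ℝ) (hg : g = fun y => Real.log (f y)) :
    Real.exp ((1 / (Nat.factorial n : ℝ)) *
        ∫ x in a..t, (t - x) ^ n *
          ((x - a) ^ (β - 1) *
            Real.log (Real.exp ((x - a) ^ (1 - β) * iteratedDeriv (n + 1) g x)))) =
      f t / ∏ k ∈ Finset.range (n + 1),
        Real.exp (iteratedDeriv k g a * (t - a) ^ k / (Nat.factorial k : ℝ)) :=
  higher_mult_conformable_integral_of_deriv_general f a b t β n ht hfpos hf g hg
end

section
/- For 0 < α < 1 and β > 0, the left multiplicative Riemann–Liouville fractional derivative of t ↦ exp((t−a)^{β−1}) equals exp((Γ(β)/Γ(β−α))(x−a)^{β−α−1}) for x > a. -/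
open Real intervalIntegral

/-! Since `log ∘ exp = id`, the exponent is the classical Riemann–Liouville derivative of
`(t - a) ^ (β - 1)`. The substitution `t = a + (y - a) s` turns the fractional integral into a
Beta integral, so it equals `Γ(β) (y - a) ^ (β - α) / Γ(β - α + 1)`, and differentiating this
power with `Γ(p + 1) = p Γ(p)` gives the claim. -/

theorem integral_rpow_mul_one_sub_rpow {u v : ℝ} (hu : 0 < u) (hv : 0 < v) :
    ∫ s in (0 : ℝ)..1, s ^ (u - 1) * (1 - s) ^ (v - 1) = Gamma u * Gamma v / Gamma (u + v) := by
  have hbeta := Complex.betaIntegral_eq_Gamma_mul_div u v (by simpa) (by simpa)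
  rw [← Complex.ofReal_add, Complex.Gamma_ofReal, Complex.Gamma_ofReal,
    Complex.Gamma_ofReal] at hbeta
  apply Complex.ofReal_injective
  push_cast
  rw [← hbeta, Complex.betaIntegral, ← integral_ofReal]
  refine integral_congr fun s hs => ?_
  rw [Set.uIcc_of_le zero_le_one] at hs
  push_cast [Complex.ofReal_cpow hs.1, Complex.ofReal_cpow (sub_nonneg.2 hs.2)]
  rfl

theorem integral_sub_rpow_mul_sub_rpow {a y μ ν : ℝ} (hμ : 0 < μ) (hν : 0 < ν) (hay : a < y) :
    ∫ t in a..y, (y - t) ^ (μ - 1) * (t - a) ^ (ν - 1) =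
      Gamma μ * Gamma ν / Gamma (μ + ν) * (y - a) ^ (μ + ν - 1) := by
  set c := y - a
  have hc : 0 < c := sub_pos.2 hay
  have hsub := integral_comp_mul_add (a := 0) (b := 1)
    (fun t => (y - t) ^ (μ - 1) * (t - a) ^ (ν - 1)) hc.ne' a
  have hscale : ∀ s ∈ Set.uIcc (0 : ℝ) 1, (y - (c * s + a)) ^ (μ - 1) * (c * s + a - a) ^ (ν - 1)
      = c ^ (μ + ν - 2) * (s ^ (ν - 1) * (1 - s) ^ (μ - 1)) := by
    intro s hs
    rw [Set.uIcc_of_le zero_le_one] at hs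
    have h1 : y - (c * s + a) = c * (1 - s) := by ring
    rw [h1, add_sub_cancel_right, mul_rpow hc.le (sub_nonneg.2 hs.2), mul_rpow hc.le hs.1,
      show μ + ν - 2 = (μ - 1) + (ν - 1) by ring, rpow_add hc]
    ring
  simp only [mul_zero, zero_add, mul_one, c, sub_add_cancel, smul_eq_mul] at hsub
  rw [integral_congr hscale, integral_const_mul, integral_rpow_mul_one_sub_rpow hν hμ,
    eq_inv_mul_iff_mul_eq₀ hc.ne'] at hsub
  rw [← hsub, show μ + ν - 1 = (μ + ν - 2) + 1 by ring, rpow_add_one hc.ne', add_comm ν μ]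
  ring

theorem hasDerivAt_sub_rpow_div_Gamma {a x p : ℝ} (hp : p ≠ 0) (hx : a < x) :
    HasDerivAt (fun y => (y - a) ^ p / Gamma (p + 1)) ((x - a) ^ (p - 1) / Gamma p) x := by
  have hpow := ((hasDerivAt_id x).sub_const a).rpow_const (p := p) (Or.inl (sub_pos.2 hx).ne')
  refine (hpow.div_const (Gamma (p + 1))).congr_deriv ?_
  rw [Gamma_add_one hp, id, one_mul, mul_div_mul_left _ _ hp]

theorem riemannLiouville_integral_sub_rpow {a y α β : ℝ} (hα1 : α < 1) (hβ : 0 < β)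
    (hy : a < y) :
    1 / Gamma (1 - α) * ∫ t in a..y, (y - t) ^ (-α) * (t - a) ^ (β - 1) =
      Gamma β * ((y - a) ^ (β - α) / Gamma (β - α + 1)) := by
  have hΓ : Gamma (1 - α) ≠ 0 := (Gamma_pos_of_pos (sub_pos.2 hα1)).ne'
  rw [← sub_sub_cancel_left 1 α, integral_sub_rpow_mul_sub_rpow (sub_pos.2 hα1) hβ hy,
    show 1 - α + β - 1 = β - α by ring, show 1 - α + β = β - α + 1 by ring]
  field_simp

theorem hasDerivAt_riemannLiouville_integral_sub_rpow {a x α β : ℝ} (hα1 : α < 1) (hβ : 0 < β)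
    (hβα : α < β) (hx : a < x) :
    HasDerivAt (fun y => 1 / Gamma (1 - α) * ∫ t in a..y, (y - t) ^ (-α) * (t - a) ^ (β - 1))
      (Gamma β / Gamma (β - α) * (x - a) ^ (β - α - 1)) x := by
  have hev : (fun y => Gamma β * ((y - a) ^ (β - α) / Gamma (β - α + 1))) =ᶠ[nhds x]
      fun y => 1 / Gamma (1 - α) * ∫ t in a..y, (y - t) ^ (-α) * (t - a) ^ (β - 1) := by
    filter_upwards [eventually_gt_nhds hx] with y hy
    exact (riemannLiouville_integral_sub_rpow hα1 hβ hy).symm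
  refine (((hasDerivAt_sub_rpow_div_Gamma (sub_ne_zero.2 hβα.ne') hx).const_mul
    (Gamma β)).congr_of_eventuallyEq hev.symm).congr_deriv ?_
  ring

theorem mult_RL_deriv_of_power_general
    (a x α β : ℝ) (hα1 : α < 1) (hβ : 0 < β) (hβα : α < β) (hx : a < x) :
    Real.exp (deriv (fun y =>
        (1 / Real.Gamma (1 - α)) *
          ∫ t in a..y, (y - t) ^ (-α) * Real.log (Real.exp ((t - a) ^ (β - 1)))) x) =
      Real.exp (Real.Gamma β / Real.Gamma (β - α) * (x - a) ^ (β - α - 1)) := by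
  simp_rw [Real.log_exp]
  rw [(hasDerivAt_riemannLiouville_integral_sub_rpow hα1 hβ hβα hx).deriv]

theorem mult_RL_deriv_of_power
    (a x α β : ℝ) (hα : 0 < α) (hα1 : α < 1) (hβ : 0 < β) (hβα : α < β) (hx : a < x) :
    Real.exp (deriv (fun y =>
        (1 / Real.Gamma (1 - α)) *
          ∫ t in a..y, (y - t) ^ (-α) * Real.log (Real.exp ((t - a) ^ (β - 1)))) x) =
      Real.exp (Real.Gamma β / Real.Gamma (β - α) * (x - a) ^ (β - α - 1)) :=
  mult_RL_deriv_of_power_general a x α β hα1 hβ hβα hx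
end
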